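/- Assume V⁺ admits a monomial parametrization (with data M ∈ ℤ^{n×d}, K ⊆ ℝ_{>0}^r, γ : K → ℝ^d) and also admits a monomial parametrization with exponent matrix A (data p, A, K, ψ, with the same set K), and assume the cone generator matrix E has no zero row. Then for every x ∈ ℝ_{>0}^n there exists k ∈ K such that the following equivalent conditions hold: (i) (k,x) ∈ V⁺; (ii) x^M = γ(k); (iii) there exists ξ ∈ ℝ_{>0}^{n−p} with x = ψ(k)⋆ξ^A. -/

import Mathlib

open Matrix

noncomputable section

/-- The monomial map φ: `phi Y x j = ∏ i, x i ^ Y i j`. -/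
def phi {n r : ℕ} (Y : Matrix (Fin n) (Fin r) ℕ) (x : Fin n → ℝ) : Fin r → ℝ :=
  fun j => ∏ i, x i ^ Y i j

/-- The positive steady state variety V⁺. -/
def Vplus {n r : ℕ} (Y : Matrix (Fin n) (Fin r) ℕ) (S : Matrix (Fin n) (Fin r) ℝ) :
    Set ((Fin r → ℝ) × (Fin n → ℝ)) :=
  {p | (∀ j, 0 < p.1 j) ∧ (∀ i, 0 < p.2 i) ∧
    S.mulVec (fun j => p.1 j * phi Y p.2 j) = 0}

/-- `E` is a cone generator matrix for `S`:
`E` is nonnegative and `ker S ∩ ℝ_{≥0}^r = {Eλ : λ ≥ 0}`. -/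
def IsConeGenMatrix {n r d : ℕ} (S : Matrix (Fin n) (Fin r) ℝ)
    (E : Matrix (Fin r) (Fin d) ℝ) : Prop :=
  (∀ j l, 0 ≤ E j l) ∧
  {v : Fin r → ℝ | S.mulVec v = 0 ∧ ∀ j, 0 ≤ v j} =
    {v : Fin r → ℝ | ∃ lam : Fin d → ℝ, (∀ l, 0 ≤ lam l) ∧ v = E.mulVec lam}

/-- The coefficient cone Λ(E). -/
def Lambda {r d : ℕ} (E : Matrix (Fin r) (Fin d) ℝ) : Set (Fin d → ℝ) :=
  {lam | (∀ l, 0 ≤ lam l) ∧ ∀ j, 0 < E.mulVec lam j}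

/-- `ξ^B`: for a rational `q × m` matrix `B`, `(ξ^B) j = ∏ i, ξ i ^ (B i j)` (real powers). -/
def vecPow {q m : ℕ} (ξ : Fin q → ℝ) (B : Matrix (Fin q) (Fin m) ℚ) : Fin m → ℝ :=
  fun j => ∏ i, ξ i ^ ((B i j : ℝ))

/-- V⁺ admits a monomial parametrization with exponent matrix `A` (data `p`, `A`, `K`, `ψ`). -/
def IsMonomialParamExp {n r : ℕ} (Y : Matrix (Fin n) (Fin r) ℕ)
    (S : Matrix (Fin n) (Fin r) ℝ) (p : ℕ) (A : Matrix (Fin (n - p)) (Fin n) ℚ)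
    (K : Set (Fin r → ℝ)) (ψ : (Fin r → ℝ) → (Fin n → ℝ)) : Prop :=
  p < n ∧ A.rank = n - p ∧ (∀ k ∈ K, ∀ j, 0 < k j) ∧ (∀ k ∈ K, ∀ i, 0 < ψ k i) ∧
  ∀ k x, (∀ j : Fin r, 0 < k j) → (∀ i : Fin n, 0 < x i) →
    ((k, x) ∈ Vplus Y S ↔ k ∈ K ∧
      ∃ ξ : Fin (n - p) → ℝ, (∀ l, 0 < ξ l) ∧ x = fun i => ψ k i * vecPow ξ A i)

/-- `Z` is a conservation matrix for `S` (with `s = rank S`):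
its rows form a basis of the left kernel of `S`. -/
def IsConservationMatrix {n r : ℕ} (S : Matrix (Fin n) (Fin r) ℝ) (s : ℕ)
    (Z : Matrix (Fin (n - s)) (Fin n) ℝ) : Prop :=
  S.rank = s ∧ s < n ∧ LinearIndependent ℝ (fun i => Z i) ∧
    Submodule.span ℝ (Set.range (fun i => Z i)) = LinearMap.ker S.vecMulLinear

/-- `im₊(Z) = {Zx : x ≥ 0}`. -/
def imPos {m n : ℕ} (Z : Matrix (Fin m) (Fin n) ℝ) : Set (Fin m → ℝ) :=
  {c | ∃ x : Fin n → ℝ, (∀ i, 0 ≤ x i) ∧ c = Z.mulVec x}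

/-- The real row space of a rational matrix. -/
def rowSpace {q m : ℕ} (A : Matrix (Fin q) (Fin m) ℚ) : Submodule ℝ (Fin m → ℝ) :=
  Submodule.span ℝ (Set.range (fun l => fun i => ((A l i : ℝ))))

/-- The column space (image) of `S`. -/
def colSpace {n r : ℕ} (S : Matrix (Fin n) (Fin r) ℝ) : Submodule ℝ (Fin n → ℝ) :=
  LinearMap.range S.mulVecLin

/-- Componentwise sign of a vector. -/
def signVec {m : ℕ} (v : Fin m → ℝ) : Fin m → ℝ := fun i => Real.sign (v i)

/-- V⁺ admits a monomial parametrization (data `M`, `K`, `γ`), with `p = rank M < n`. -/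
def IsMonomialParamM {n r d : ℕ} (Y : Matrix (Fin n) (Fin r) ℕ)
    (S : Matrix (Fin n) (Fin r) ℝ) (M : Matrix (Fin n) (Fin d) ℤ) (p : ℕ)
    (K : Set (Fin r → ℝ)) (γ : (Fin r → ℝ) → Fin d → ℝ) : Prop :=
  p < n ∧ (M.map (Int.cast : ℤ → ℚ)).rank = p ∧ (∀ k ∈ K, ∀ j, 0 < k j) ∧
  ∀ k x, (∀ j : Fin r, 0 < k j) → (∀ i : Fin n, 0 < x i) →
    ((k, x) ∈ Vplus Y S ↔ k ∈ K ∧ ∀ j, (∏ i, x i ^ M i j) = γ k j)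

/-!
Proof idea: since `E` is nonnegative without zero rows, `v = E·𝟙` is a strictly positive vector of
`ker S`. Given a positive `x`, the rate constants `k = v / φ(x)` make `k ⋆ φ(x) = v`, so
`(k, x) ∈ V⁺`; each of the two parametrizations then yields `k ∈ K` together with condition
(ii), respectively (iii).
-/

theorem one_mem_Lambda {r d : ℕ} {E : Matrix (Fin r) (Fin d) ℝ} (hE : ∀ j l, 0 ≤ E j l)
    (hrow : ∀ j, ∃ l, E j l ≠ 0) : (fun _ => (1 : ℝ)) ∈ Lambda E := by
  refine ⟨fun _ => zero_le_one, fun j => ?_⟩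
  obtain ⟨l, hl⟩ := hrow j
  simp only [mulVec, dotProduct, mul_one]
  exact Finset.sum_pos' (fun i _ => hE j i) ⟨l, Finset.mem_univ l, (hE j l).lt_of_ne' hl⟩

theorem IsConeGenMatrix.mulVec_mem_ker {n r d : ℕ} {S : Matrix (Fin n) (Fin r) ℝ}
    {E : Matrix (Fin r) (Fin d) ℝ} (hE : IsConeGenMatrix S E) {lam : Fin d → ℝ}
    (hlam : ∀ l, 0 ≤ lam l) : S *ᵥ (E *ᵥ lam) = 0 := by
  have hmem : E *ᵥ lam ∈ {v : Fin r → ℝ | S *ᵥ v = 0 ∧ ∀ j, 0 ≤ v j} := by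
    rw [hE.2]
    exact ⟨lam, hlam, rfl⟩
  exact hmem.1

theorem IsConeGenMatrix.exists_pos_mem_ker {n r d : ℕ} {S : Matrix (Fin n) (Fin r) ℝ}
    {E : Matrix (Fin r) (Fin d) ℝ} (hE : IsConeGenMatrix S E) (hrow : ∀ j, ∃ l, E j l ≠ 0) :
    ∃ v : Fin r → ℝ, S *ᵥ v = 0 ∧ ∀ j, 0 < v j :=
  have hone := one_mem_Lambda hE.1 hrow
  ⟨_, hE.mulVec_mem_ker hone.1, hone.2⟩

theorem phi_pos {n r : ℕ} (Y : Matrix (Fin n) (Fin r) ℕ) {x : Fin n → ℝ}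
    (hx : ∀ i, 0 < x i) (j : Fin r) : 0 < phi Y x j :=
  Finset.prod_pos fun i _ => pow_pos (hx i) _

theorem div_phi_mem_Vplus {n r : ℕ} (Y : Matrix (Fin n) (Fin r) ℕ)
    {S : Matrix (Fin n) (Fin r) ℝ} {v : Fin r → ℝ} (hSv : S *ᵥ v = 0) (hv : ∀ j, 0 < v j)
    {x : Fin n → ℝ} (hx : ∀ i, 0 < x i) : (fun j => v j / phi Y x j, x) ∈ Vplus Y S := by
  refine ⟨fun j => div_pos (hv j) (phi_pos Y hx j), hx, ?_⟩
  have hrates : (fun j => v j / phi Y x j * phi Y x j) = v :=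
    funext fun j => div_mul_cancel₀ _ (phi_pos Y hx j).ne'
  simpa only [hrates] using hSv

theorem exists_k_with_equivalent_conditions_general {n r d dE p : ℕ}
    (Y : Matrix (Fin n) (Fin r) ℕ) (S : Matrix (Fin n) (Fin r) ℝ)
    (M : Matrix (Fin n) (Fin d) ℤ) (K : Set (Fin r → ℝ))
    (γ : (Fin r → ℝ) → Fin d → ℝ) (hparamM : IsMonomialParamM Y S M p K γ)
    (A : Matrix (Fin (n - p)) (Fin n) ℚ) (ψ : (Fin r → ℝ) → (Fin n → ℝ))
    (hparamA : IsMonomialParamExp Y S p A K ψ)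
    (E : Matrix (Fin r) (Fin dE) ℝ) (hE : IsConeGenMatrix S E)
    (hrow : ∀ j, ∃ l, E j l ≠ 0)
    (x : Fin n → ℝ) (hx : ∀ i, 0 < x i) :
    ∃ k ∈ K, (k, x) ∈ Vplus Y S ∧ (∀ j, (∏ i, x i ^ M i j) = γ k j) ∧
      ∃ ξ : Fin (n - p) → ℝ, (∀ l, 0 < ξ l) ∧ x = fun i => ψ k i * vecPow ξ A i := by
  obtain ⟨v, hSv, hv⟩ := hE.exists_pos_mem_ker hrow
  have hmem := div_phi_mem_Vplus Y hSv hv hx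
  obtain ⟨hK, hM⟩ := (hparamM.2.2.2 _ x hmem.1 hx).mp hmem
  obtain ⟨-, hA⟩ := (hparamA.2.2.2.2 _ x hmem.1 hx).mp hmem
  exact ⟨_, hK, hmem, hM, hA⟩

/-- if E has no zero row, then for every positive x there is k ∈ K with
(i) (k,x) ∈ V⁺, (ii) x^M = γ(k), (iii) x = ψ(k) ⋆ ξ^A for some positive ξ. -/
theorem exists_k_with_equivalent_conditions {n r d dE p : ℕ} (hn : 1 ≤ n) (hr : 1 ≤ r)
    (Y : Matrix (Fin n) (Fin r) ℕ) (S : Matrix (Fin n) (Fin r) ℝ)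
    (M : Matrix (Fin n) (Fin d) ℤ) (K : Set (Fin r → ℝ))
    (γ : (Fin r → ℝ) → Fin d → ℝ) (hparamM : IsMonomialParamM Y S M p K γ)
    (A : Matrix (Fin (n - p)) (Fin n) ℚ) (ψ : (Fin r → ℝ) → (Fin n → ℝ))
    (hparamA : IsMonomialParamExp Y S p A K ψ)
    (E : Matrix (Fin r) (Fin dE) ℝ) (hE : IsConeGenMatrix S E)
    (hrow : ∀ j, ∃ l, E j l ≠ 0)
    (x : Fin n → ℝ) (hx : ∀ i, 0 < x i) :
    ∃ k ∈ K, (k, x) ∈ Vplus Y S ∧ (∀ j, (∏ i, x i ^ M i j) = γ k j) ∧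
      ∃ ξ : Fin (n - p) → ℝ, (∀ l, 0 < ξ l) ∧ x = fun i => ψ k i * vecPow ξ A i :=
  exists_k_with_equivalent_conditions_general Y S M K γ hparamM A ψ hparamA E hE hrow x hx
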